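/- For (not necessarily Hermitian) complex n×n matrices A, B, the product rule f_{AB} = ½ G(df_A, df_B) + (i/2) Ω(df_A, df_B) holds, where f_A(ψ) = ½⟨ψ|Aψ⟩ is the complex-valued quadratic function associated to A. -/

import Mathlib

/-!
With `z = q + i p`, the quadratic function `f_A` is half a real-bilinear form evaluated on the
diagonal, so its derivatives combine into the Wirtinger derivatives
`∂_{q_k} f_A - i ∂_{p_k} f_A = (z̄ᵀ A)_k` and `∂_{q_k} f_B + i ∂_{p_k} f_B = (B z)_k`.
The right-hand side is `½ Σ_k` of the product of these two combinations, i.e. `½ z̄ᵀ A B z = f_{AB}`.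
-/

open Matrix Complex

noncomputable section

/-- Identify a point of `ℝⁿ × ℝⁿ` (coordinates `(q, p)`) with a vector of `ℂⁿ`
via `z^k = q^k + i p^k`. -/
def toVecC {n : ℕ} (x : (Fin n → ℝ) × (Fin n → ℝ)) : Fin n → ℂ :=
  fun k => ⟨x.1 k, x.2 k⟩

/-- The complex-valued quadratic function `f_A(ψ) = ½⟨ψ|Aψ⟩` associated to an
arbitrary matrix `A ∈ gl(n,ℂ)`, viewed as a function on `ℝⁿ × ℝⁿ ≅ ℂⁿ`. -/
def quadFunC {n : ℕ} (A : Matrix (Fin n) (Fin n) ℂ)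
    (x : (Fin n → ℝ) × (Fin n → ℝ)) : ℂ :=
  (1 / 2 : ℂ) * (star (toVecC x) ⬝ᵥ A.mulVec (toVecC x))

open Finset

def Matrix.sesqFormL {ι : Type*} [Fintype ι] (A : Matrix ι ι ℂ) :
    (ι → ℂ) →L[ℝ] (ι → ℂ) →L[ℝ] ℂ :=
  (LinearMap.mk₂ ℝ (fun u w => star u ⬝ᵥ A *ᵥ w)
    (fun u u' w => by simp [add_dotProduct])
    (fun c u w => by simp [star_smul])
    (fun u w w' => by simp [mulVec_add, dotProduct_add])
    (fun c u w => by simp [mulVec_smul])).toContinuousBilinearMap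

@[simp]
lemma Matrix.sesqFormL_apply {ι : Type*} [Fintype ι] (A : Matrix ι ι ℂ) (u w : ι → ℂ) :
    A.sesqFormL u w = star u ⬝ᵥ A *ᵥ w := rfl

section

variable {n : ℕ}

def toVecCLM : ((Fin n → ℝ) × (Fin n → ℝ)) →L[ℝ] (Fin n → ℂ) :=
  LinearMap.toContinuousLinearMap
    { toFun := toVecC
      map_add' := fun x y => by ext k; simp [toVecC, Complex.ext_iff]
      map_smul' := fun c x => by ext k; simp [toVecC, Complex.ext_iff] }

@[simp]
lemma toVecCLM_apply (x : (Fin n → ℝ) × (Fin n → ℝ)) : toVecCLM x = toVecC x := rfl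

lemma fderiv_quadFunC_apply (A : Matrix (Fin n) (Fin n) ℂ) (x v : (Fin n → ℝ) × (Fin n → ℝ)) :
    fderiv ℝ (quadFunC A) x v =
      (1 / 2) * (star (toVecC x) ᵥ* A ⬝ᵥ toVecC v + star (toVecC v) ⬝ᵥ A *ᵥ toVecC x) := by
  have hL := toVecCLM.hasFDerivAt (x := x)
  have h := (A.sesqFormL.hasFDerivAt_of_bilinear hL hL).const_mul (1 / 2 : ℂ)
  rw [show quadFunC A = fun y => (1 / 2 : ℂ) * A.sesqFormL (toVecCLM y) (toVecCLM y) from rfl,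
    h.fderiv]
  simp [mul_add, dotProduct_mulVec]

lemma toVecC_single_fst (k : Fin n) : toVecC (Pi.single k 1, 0) = Pi.single k 1 := by
  ext j
  by_cases h : j = k <;> simp [toVecC, h, Complex.ext_iff]

lemma toVecC_single_snd (k : Fin n) : toVecC (0, Pi.single k 1) = Pi.single k I := by
  ext j
  by_cases h : j = k <;> simp [toVecC, h, Complex.ext_iff]

lemma fderiv_quadFunC_fst_sub_I_mul_snd (A : Matrix (Fin n) (Fin n) ℂ)
    (x : (Fin n → ℝ) × (Fin n → ℝ)) (k : Fin n) :
    fderiv ℝ (quadFunC A) x (Pi.single k 1, 0) - I * fderiv ℝ (quadFunC A) x (0, Pi.single k 1) =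
      (star (toVecC x) ᵥ* A) k := by
  simp only [fderiv_quadFunC_apply, toVecC_single_fst, toVecC_single_snd, Pi.star_single,
    single_dotProduct, dotProduct_single, star_one, Complex.star_def, conj_I]
  linear_combination (1 / 2 * (A *ᵥ toVecC x) k - 1 / 2 * (star (toVecC x) ᵥ* A) k) * I_sq

lemma fderiv_quadFunC_fst_add_I_mul_snd (A : Matrix (Fin n) (Fin n) ℂ)
    (x : (Fin n → ℝ) × (Fin n → ℝ)) (k : Fin n) :
    fderiv ℝ (quadFunC A) x (Pi.single k 1, 0) + I * fderiv ℝ (quadFunC A) x (0, Pi.single k 1) =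
      (A *ᵥ toVecC x) k := by
  simp only [fderiv_quadFunC_apply, toVecC_single_fst, toVecC_single_snd, Pi.star_single,
    single_dotProduct, dotProduct_single, star_one, Complex.star_def, conj_I]
  linear_combination (1 / 2 * (star (toVecC x) ᵥ* A) k - 1 / 2 * (A *ᵥ toVecC x) k) * I_sq

end

/-- For arbitrary complex matrices `A, B`, the associative product is encoded by
`f_{AB} = ½ G(df_A, df_B) + (i/2) Ω(df_A, df_B)`. -/
theorem quadFunC_mul {n : ℕ}
    (A B : Matrix (Fin n) (Fin n) ℂ) (x : (Fin n → ℝ) × (Fin n → ℝ)) :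
    quadFunC (A * B) x =
      (1 / 2 : ℂ) * ∑ k : Fin n,
        (fderiv ℝ (quadFunC A) x (Pi.single k 1, 0) *
           fderiv ℝ (quadFunC B) x (Pi.single k 1, 0) +
         fderiv ℝ (quadFunC A) x (0, Pi.single k 1) *
           fderiv ℝ (quadFunC B) x (0, Pi.single k 1)) +
      (Complex.I / 2) * ∑ k : Fin n,
        (fderiv ℝ (quadFunC A) x (Pi.single k 1, 0) *
           fderiv ℝ (quadFunC B) x (0, Pi.single k 1) -
         fderiv ℝ (quadFunC A) x (0, Pi.single k 1) *
           fderiv ℝ (quadFunC B) x (Pi.single k 1, 0)) := by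
  have hAB : quadFunC (A * B) x =
      (1 / 2 : ℂ) * ∑ k, (star (toVecC x) ᵥ* A) k * (B *ᵥ toVecC x) k := by
    rw [quadFunC, ← mulVec_mulVec, dotProduct_mulVec]
    rfl
  simp only [hAB, ← fderiv_quadFunC_fst_sub_I_mul_snd A x, ← fderiv_quadFunC_fst_add_I_mul_snd B x,
    mul_sum, ← sum_add_distrib]
  refine sum_congr rfl fun k _ => ?_
  linear_combination (-1 / 2 * fderiv ℝ (quadFunC A) x (0, Pi.single k 1) *
    fderiv ℝ (quadFunC B) x (0, Pi.single k 1)) * I_sq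

end
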